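/- arXiv:1905.03019 — 3 statements merged into one kernel-verified Lean document; each statement's English description precedes it below -/
import Mathlib

section
/- Let M' ⊂ ℂ be a finite nonempty set with Σ_{y∈M'} y² = 0 and σ_b² = (1/|M'|) Σ_{y∈M'} |y|², and let (C_k)_{k≥0} be i.i.d. random variables uniform on M'. Suppose that for each N, x*_N : M'^N → {−1,1}^N is any map satisfying the conditional-expectation-method guarantee η_N(c ⊙ x*_N(c)) ≤ 2^{−N} Σ_{x ∈ {−1,1}^N} η_N(c ⊙ x) for every c ∈ M'^N, where ⊙ denotes the componentwise product. Then, almost surely, limsup_{N→∞} η_N((C_0,…,C_{N−1}) ⊙ x*_N(C_0,…,C_{N−1})) ≤ 6. -/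
open MeasureTheory ProbabilityTheory Filter Finset
open scoped ENNReal NNReal

/-- The oversampled discrete-time OFDM symbol
`s(n, b) = (1/(σb·√N)) Σ_{k=0}^{N−1} b_k exp(2πi k n/(L N))`. -/
noncomputable def ofdm (L : ℕ) (σb : ℝ) {N : ℕ} (b : Fin N → ℂ) (n : ℕ) : ℂ :=
  ((1 / (σb * Real.sqrt N) : ℝ) : ℂ) *
    ∑ k : Fin N, b k * Complex.exp (2 * Real.pi * Complex.I * (k : ℕ) * n / ((L : ℂ) * (N : ℂ)))

/-- The Symbol Raw Cubic Metric `η_N(b) = (1/(L N)) Σ_{n=0}^{L N−1} |s(n, b)|^6`. -/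
noncomputable def srcm (L : ℕ) (σb : ℝ) {N : ℕ} (b : Fin N → ℂ) : ℝ :=
  (1 / (L * N) : ℝ) * ∑ n ∈ Finset.range (L * N), ‖ofdm L σb b n‖ ^ 6

/-!
Write the `n`-th sample of the OFDM symbol of `c ⊙ ε` as a Rademacher sum `Σ ±aₖ` with
`|aₖ|² = |c_k|² / (σ_b² N)`. Expanding `(Z Z̄)³` one coordinate at a time gives the exact sixth
moment over the signs, whence `E|Σ ±aₖ|⁶ ≤ 6 A₂³ + 9 A₂ |Σ aₖ²|² + 16 A₆` with `A_p = Σ |aₖ|^p`.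
The term `Σ aₖ²` is a trigonometric sum with the distinct frequencies `2k < LN` (as `L ≥ 2`), so
averaging its square over the `LN` samples gives `A₄ = O(1/N)`; also `A₆ = O(1/N²)`. Hence the
sign average of `η_N`, which the guarantee dominates, is at most `6 A₂³ + O(1/N)`, and `A₂ → 1`
almost surely by the strong law of large numbers applied to `|C_k|²`.
-/

open ComplexConjugate
open scoped Topology

section SignedSum

variable {N : ℕ}

def signedSum (ε : Fin N → Bool) (a : Fin N → ℂ) : ℂ :=
  ∑ k, (if ε k then 1 else -1) * a k

def mixedMoment (a b : Fin N → ℂ) (p q : ℕ) : ℂ :=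
  ∑ ε : Fin N → Bool, signedSum ε a ^ p * signedSum ε b ^ q

def mixedPowerSum (a b : Fin N → ℂ) (i j : ℕ) : ℂ :=
  ∑ k, a k ^ i * b k ^ j

lemma signedSum_cons (s : Bool) (ε : Fin N → Bool) (a : Fin (N + 1) → ℂ) :
    signedSum (Fin.cons s ε : Fin (N + 1) → Bool) a
      = (if s then 1 else -1) * a 0 + signedSum ε (Fin.tail a) := by
  simp [signedSum, Fin.sum_univ_succ, Fin.tail]

lemma mixedPowerSum_succ (a b : Fin (N + 1) → ℂ) (i j : ℕ) :
    mixedPowerSum a b i j = a 0 ^ i * b 0 ^ j + mixedPowerSum (Fin.tail a) (Fin.tail b) i j :=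
  Fin.sum_univ_succ _

lemma mixedPowerSum_comm (a b : Fin N → ℂ) (i j : ℕ) :
    mixedPowerSum b a j i = mixedPowerSum a b i j :=
  sum_congr rfl fun _ _ => mul_comm _ _

lemma mixedMoment_comm (a b : Fin N → ℂ) (p q : ℕ) :
    mixedMoment b a q p = mixedMoment a b p q :=
  sum_congr rfl fun _ _ => mul_comm _ _

/-- Summing over the first sign symmetrizes in `(a 0, b 0)`; with `E` a polynomial in `Z, W` this
is a recursion between mixed moments. -/
lemma mixedMoment_succ (a b : Fin (N + 1) → ℂ) (p q : ℕ) (E : ℂ → ℂ → ℂ)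
    (hE : ∀ Z W, (a 0 + Z) ^ p * (b 0 + W) ^ q + (-a 0 + Z) ^ p * (-b 0 + W) ^ q = 2 * E Z W) :
    mixedMoment a b p q =
      2 * ∑ ε : Fin N → Bool, E (signedSum ε (Fin.tail a)) (signedSum ε (Fin.tail b)) := by
  rw [mixedMoment, ← (Fin.consEquiv fun _ => Bool).sum_comp, Fintype.sum_prod_type, mul_sum,
    Fintype.sum_bool, ← sum_add_distrib]
  refine sum_congr rfl fun ε _ => ?_
  rw [← hE]
  simp only [Fin.consEquiv, Equiv.coe_fn_mk, signedSum_cons, Bool.false_eq_true, if_true,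
    if_false, one_mul, neg_one_mul]

lemma mixedMoment_zero_zero (a b : Fin N → ℂ) : mixedMoment a b 0 0 = 2 ^ N := by
  simp [mixedMoment]

lemma mixedMoment_one_one (a b : Fin N → ℂ) :
    mixedMoment a b 1 1 = 2 ^ N * mixedPowerSum a b 1 1 := by
  induction N with
  | zero => simp [mixedMoment, mixedPowerSum, signedSum]
  | succ N ih =>
    rw [mixedMoment_succ a b 1 1 (fun Z W => Z ^ 1 * W ^ 1 + a 0 * b 0 * (Z ^ 0 * W ^ 0))
      (by intros; ring)]
    simp only [sum_add_distrib, ← mul_sum, ← mixedMoment.eq_1, ih, mixedMoment_zero_zero,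
      mixedPowerSum_succ a b]
    ring

lemma mixedMoment_two_zero (a b : Fin N → ℂ) :
    mixedMoment a b 2 0 = 2 ^ N * mixedPowerSum a b 2 0 := by
  induction N with
  | zero => simp [mixedMoment, mixedPowerSum, signedSum]
  | succ N ih =>
    rw [mixedMoment_succ a b 2 0 (fun Z W => Z ^ 2 * W ^ 0 + a 0 ^ 2 * (Z ^ 0 * W ^ 0))
      (by intros; ring)]
    simp only [sum_add_distrib, ← mul_sum, ← mixedMoment.eq_1, ih, mixedMoment_zero_zero,
      mixedPowerSum_succ a b]
    ring

lemma mixedMoment_zero_two (a b : Fin N → ℂ) :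
    mixedMoment a b 0 2 = 2 ^ N * mixedPowerSum a b 0 2 := by
  rw [← mixedMoment_comm, mixedMoment_two_zero, mixedPowerSum_comm]

lemma mixedMoment_two_two (a b : Fin N → ℂ) :
    mixedMoment a b 2 2 = 2 ^ N * (2 * mixedPowerSum a b 1 1 ^ 2
      + mixedPowerSum a b 2 0 * mixedPowerSum a b 0 2 - 2 * mixedPowerSum a b 2 2) := by
  induction N with
  | zero => simp [mixedMoment, mixedPowerSum, signedSum]
  | succ N ih =>
    rw [mixedMoment_succ a b 2 2 (fun Z W => Z ^ 2 * W ^ 2 + 4 * a 0 * b 0 * (Z ^ 1 * W ^ 1)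
      + a 0 ^ 2 * (Z ^ 0 * W ^ 2) + b 0 ^ 2 * (Z ^ 2 * W ^ 0)
      + a 0 ^ 2 * b 0 ^ 2 * (Z ^ 0 * W ^ 0)) (by intros; ring)]
    simp only [sum_add_distrib, ← mul_sum, ← mixedMoment.eq_1, ih, mixedMoment_zero_zero,
      mixedMoment_one_one, mixedMoment_two_zero, mixedMoment_zero_two, mixedPowerSum_succ a b]
    ring

lemma mixedMoment_three_one (a b : Fin N → ℂ) :
    mixedMoment a b 3 1 = 2 ^ N * (3 * mixedPowerSum a b 1 1 * mixedPowerSum a b 2 0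
      - 2 * mixedPowerSum a b 3 1) := by
  induction N with
  | zero => simp [mixedMoment, mixedPowerSum, signedSum]
  | succ N ih =>
    rw [mixedMoment_succ a b 3 1 (fun Z W => Z ^ 3 * W ^ 1 + 3 * a 0 ^ 2 * (Z ^ 1 * W ^ 1)
      + 3 * a 0 * b 0 * (Z ^ 2 * W ^ 0) + a 0 ^ 3 * b 0 * (Z ^ 0 * W ^ 0)) (by intros; ring)]
    simp only [sum_add_distrib, ← mul_sum, ← mixedMoment.eq_1, ih, mixedMoment_zero_zero,
      mixedMoment_one_one, mixedMoment_two_zero, mixedPowerSum_succ a b]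
    ring

lemma mixedMoment_one_three (a b : Fin N → ℂ) :
    mixedMoment a b 1 3 = 2 ^ N * (3 * mixedPowerSum a b 1 1 * mixedPowerSum a b 0 2
      - 2 * mixedPowerSum a b 1 3) := by
  rw [← mixedMoment_comm, mixedMoment_three_one]
  simp only [mixedPowerSum_comm]

lemma mixedMoment_three_three (a b : Fin N → ℂ) :
    mixedMoment a b 3 3 = 2 ^ N * (6 * mixedPowerSum a b 1 1 ^ 3
      + 9 * mixedPowerSum a b 1 1 * mixedPowerSum a b 2 0 * mixedPowerSum a b 0 2
      - 18 * mixedPowerSum a b 1 1 * mixedPowerSum a b 2 2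
      - 6 * mixedPowerSum a b 0 2 * mixedPowerSum a b 3 1
      - 6 * mixedPowerSum a b 2 0 * mixedPowerSum a b 1 3 + 16 * mixedPowerSum a b 3 3) := by
  induction N with
  | zero => simp [mixedMoment, mixedPowerSum, signedSum]
  | succ N ih =>
    rw [mixedMoment_succ a b 3 3 (fun Z W => Z ^ 3 * W ^ 3 + 9 * a 0 * b 0 * (Z ^ 2 * W ^ 2)
      + 3 * b 0 ^ 2 * (Z ^ 3 * W ^ 1) + 3 * a 0 ^ 2 * (Z ^ 1 * W ^ 3)
      + 9 * a 0 ^ 2 * b 0 ^ 2 * (Z ^ 1 * W ^ 1) + 3 * a 0 ^ 3 * b 0 * (Z ^ 0 * W ^ 2)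
      + 3 * a 0 * b 0 ^ 3 * (Z ^ 2 * W ^ 0) + a 0 ^ 3 * b 0 ^ 3 * (Z ^ 0 * W ^ 0))
      (by intros; ring)]
    simp only [sum_add_distrib, ← mul_sum, ← mixedMoment.eq_1, ih, mixedMoment_zero_zero,
      mixedMoment_one_one, mixedMoment_two_zero, mixedMoment_zero_two, mixedMoment_two_two,
      mixedMoment_three_one, mixedMoment_one_three, mixedPowerSum_succ a b]
    ring

lemma signedSum_conj (ε : Fin N → Bool) (a : Fin N → ℂ) :
    signedSum ε (fun k => conj (a k)) = conj (signedSum ε a) := by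
  simp only [signedSum, map_sum, map_mul]
  exact sum_congr rfl fun k _ => by split_ifs <;> simp

lemma mixedPowerSum_conj (a : Fin N → ℂ) (i j : ℕ) :
    mixedPowerSum (fun k => conj (a k)) a i j
      = conj (mixedPowerSum a (fun k => conj (a k)) i j) := by
  simp only [mixedPowerSum, map_sum, map_mul, map_pow, Complex.conj_conj]

lemma mixedPowerSum_self_conj (a : Fin N → ℂ) (i : ℕ) :
    mixedPowerSum a (fun k => conj (a k)) i i = ((∑ k, ‖a k‖ ^ (2 * i) : ℝ) : ℂ) := by
  push_cast
  exact sum_congr rfl fun k _ => by rw [← mul_pow, Complex.mul_conj', pow_mul]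

theorem sum_norm_signedSum_pow_six (a : Fin N → ℂ) :
    ∑ ε : Fin N → Bool, ‖signedSum ε a‖ ^ 6 = 2 ^ N * (6 * (∑ k, ‖a k‖ ^ 2) ^ 3
      + 9 * (∑ k, ‖a k‖ ^ 2) * ‖∑ k, a k ^ 2‖ ^ 2 - 18 * (∑ k, ‖a k‖ ^ 2) * ∑ k, ‖a k‖ ^ 4
      - 12 * ((∑ k, a k ^ 2) * conj (∑ k, a k ^ 3 * conj (a k))).re + 16 * ∑ k, ‖a k‖ ^ 6) := by
  set b : Fin N → ℂ := fun k => conj (a k)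
  set A2 := ∑ k, ‖a k‖ ^ 2
  set A4 := ∑ k, ‖a k‖ ^ 4
  set A6 := ∑ k, ‖a k‖ ^ 6
  set S := mixedPowerSum a b 2 0
  set T := mixedPowerSum a b 3 1
  have hS : ∑ k, a k ^ 2 = S := sum_congr rfl fun k _ => by simp
  have hT : ∑ k, a k ^ 3 * conj (a k) = T := sum_congr rfl fun k _ => by simp [b]
  have hP11 : mixedPowerSum a b 1 1 = A2 := mixedPowerSum_self_conj a 1
  have hP22 : mixedPowerSum a b 2 2 = A4 := mixedPowerSum_self_conj a 2
  have hP33 : mixedPowerSum a b 3 3 = A6 := mixedPowerSum_self_conj a 3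
  have hP02 : mixedPowerSum a b 0 2 = conj S := by
    rw [← mixedPowerSum_comm, mixedPowerSum_conj]
  have hP13 : mixedPowerSum a b 1 3 = conj T := by
    rw [← mixedPowerSum_comm, mixedPowerSum_conj]
  have hSS : S * conj S = ((‖S‖ ^ 2 : ℝ) : ℂ) := by push_cast; exact Complex.mul_conj' S
  have hST : conj S * T + S * conj T = ((2 * (S * conj T).re : ℝ) : ℂ) := by
    rw [← Complex.add_conj, map_mul, Complex.conj_conj]; ring
  have hnorm : ∀ z : ℂ, ((‖z‖ ^ 6 : ℝ) : ℂ) = z ^ 3 * conj z ^ 3 := fun z => by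
    rw [← mul_pow, Complex.mul_conj']; push_cast; ring
  have h := mixedMoment_three_three a b
  rw [hP02, hP13, hP11, hP22, hP33] at h
  rw [hS, hT]
  apply Complex.ofReal_injective
  rw [Complex.ofReal_sum, sum_congr rfl fun ε _ => by rw [hnorm, ← signedSum_conj],
    ← mixedMoment.eq_1, h]
  push_cast at hSS hST ⊢
  linear_combination (2 : ℂ) ^ N * (9 * (A2 : ℂ) * hSS - 6 * hST)

theorem sum_norm_signedSum_pow_six_le (a : Fin N → ℂ) :
    ∑ ε : Fin N → Bool, ‖signedSum ε a‖ ^ 6 ≤ 2 ^ N * (6 * (∑ k, ‖a k‖ ^ 2) ^ 3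
      + 9 * (∑ k, ‖a k‖ ^ 2) * ‖∑ k, a k ^ 2‖ ^ 2 + 16 * ∑ k, ‖a k‖ ^ 6) := by
  rw [sum_norm_signedSum_pow_six]
  refine mul_le_mul_of_nonneg_left ?_ (by positivity)
  set S := ∑ k, a k ^ 2
  set T := ∑ k, a k ^ 3 * conj (a k)
  have hS : ‖S‖ ≤ ∑ k, ‖a k‖ ^ 2 :=
    (norm_sum_le _ _).trans_eq (sum_congr rfl fun k _ => norm_pow _ _)
  have hT : ‖T‖ ≤ ∑ k, ‖a k‖ ^ 4 :=
    (norm_sum_le _ _).trans_eq (sum_congr rfl fun k _ => by simp; ring)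
  have hre : -(S * conj T).re ≤ ‖S‖ * ‖T‖ := by
    simpa using Complex.re_le_norm (-(S * conj T))
  have hST : ‖S‖ * ‖T‖ ≤ (∑ k, ‖a k‖ ^ 2) * ∑ k, ‖a k‖ ^ 4 :=
    mul_le_mul hS hT (norm_nonneg _) (by positivity)
  have h4 : 0 ≤ (∑ k, ‖a k‖ ^ 2) * ∑ k, ‖a k‖ ^ 4 := by positivity
  linarith

end SignedSum

theorem sum_range_norm_sum_mul_pow_sq {ι : Type*} [Fintype ι] {M : ℕ} {w : ι → ℂ}
    (hw : ∀ k, w k ^ M = 1) (hinj : Function.Injective w) (d : ι → ℂ) :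
    ∑ n ∈ range M, ‖∑ k, d k * w k ^ n‖ ^ 2 = M * ∑ k, ‖d k‖ ^ 2 := by
  classical
  rcases eq_or_ne M 0 with rfl | hM
  · simp
  have hconj : ∀ k, conj (w k) = (w k)⁻¹ := fun k =>
    (Complex.inv_eq_conj (Complex.norm_eq_one_of_pow_eq_one (hw k) hM)).symm
  have horth : ∀ k l, ∑ n ∈ range M, (w k * conj (w l)) ^ n = if k = l then (M : ℂ) else 0 := by
    intro k l
    have hwl : w l ≠ 0 := fun h => by simpa [h, hM] using hw l
    split_ifs with hkl
    · simp [hkl, hconj, hwl]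
    · have hq : w k * conj (w l) ≠ 1 := by
        rw [hconj, ne_eq, mul_inv_eq_one₀ hwl]
        exact hinj.ne hkl
      rw [geom_sum_eq hq, mul_pow, ← map_pow, hw, hw, map_one, mul_one, sub_self, zero_div]
  apply Complex.ofReal_injective
  push_cast
  simp_rw [← Complex.mul_conj', map_sum, sum_mul_sum, map_mul, map_pow]
  have hterm : ∀ n k l, d k * w k ^ n * (conj (d l) * conj (w l) ^ n)
      = d k * conj (d l) * (w k * conj (w l)) ^ n := fun _ _ _ => by ring
  simp_rw [hterm]
  rw [sum_comm, mul_sum]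
  refine sum_congr rfl fun k _ => ?_
  rw [sum_comm]
  simp_rw [← mul_sum, horth, mul_ite, mul_zero, sum_ite_eq, mem_univ, if_true]
  ring

section SRCM

variable {L : ℕ} {σb : ℝ} {N : ℕ}

noncomputable def subcarrier (L : ℕ) (σb : ℝ) (c : Fin N → ℂ) (n : ℕ) (k : Fin N) : ℂ :=
  ((1 / (σb * Real.sqrt N) : ℝ) : ℂ) * c k
    * Complex.exp (2 * Real.pi * Complex.I / ((L * N : ℕ) : ℂ)) ^ ((k : ℕ) * n)

lemma ofdm_mul_sign_eq_signedSum (c : Fin N → ℂ) (ε : Fin N → Bool) (n : ℕ) :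
    ofdm L σb (fun k => c k * (if ε k then 1 else -1)) n = signedSum ε (subcarrier L σb c n) := by
  rw [ofdm, signedSum, mul_sum]
  refine sum_congr rfl fun k _ => ?_
  rw [subcarrier, ← Complex.exp_nat_mul]
  push_cast
  ring_nf

lemma norm_subcarrier_sq (c : Fin N → ℂ) (n : ℕ) (k : Fin N) :
    ‖subcarrier L σb c n k‖ ^ 2 = (σb ^ 2 * N)⁻¹ * ‖c k‖ ^ 2 := by
  have hζ : ‖Complex.exp (2 * Real.pi * Complex.I / ((L * N : ℕ) : ℂ))‖ = 1 := by
    rw [← Complex.norm_exp_ofReal_mul_I (2 * Real.pi / (L * N : ℕ))]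
    push_cast
    ring_nf
  rw [subcarrier, norm_mul, norm_mul, norm_pow, hζ, one_pow, mul_one, mul_pow, Complex.norm_real,
    Real.norm_eq_abs, sq_abs, div_pow, mul_pow, Real.sq_sqrt (Nat.cast_nonneg N), one_pow, one_div]

lemma sum_range_norm_sum_subcarrier_sq_sq (hL : 2 ≤ L) (hN : N ≠ 0) (c : Fin N → ℂ) :
    ∑ n ∈ range (L * N), ‖∑ k, subcarrier L σb c n k ^ 2‖ ^ 2
      = (L * N : ℕ) * ((σb ^ 2 * N)⁻¹ ^ 2 * ∑ k, ‖c k‖ ^ 4) := by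
  set ζ := Complex.exp (2 * Real.pi * Complex.I / ((L * N : ℕ) : ℂ))
  have hLN : L * N ≠ 0 := by positivity
  have hζ : IsPrimitiveRoot ζ (L * N) := Complex.isPrimitiveRoot_exp _ hLN
  have hroot : ∀ k : Fin N, (ζ ^ (2 * (k : ℕ))) ^ (L * N) = 1 := fun k => by
    rw [← pow_mul, mul_comm, pow_mul, hζ.pow_eq_one, one_pow]
  have hinj : Function.Injective fun k : Fin N => ζ ^ (2 * (k : ℕ)) := fun k l hkl => by
    have h2N : 2 * N ≤ L * N := Nat.mul_le_mul_right N hL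
    have := hζ.pow_inj (by omega) (by omega) hkl
    exact Fin.ext (by omega)
  have hsq : ∀ n, ∑ k, subcarrier L σb c n k ^ 2
      = ∑ k, subcarrier L σb c 0 k ^ 2 * (ζ ^ (2 * (k : ℕ))) ^ n := fun n =>
    sum_congr rfl fun k _ => by simp only [subcarrier]; ring
  simp only [hsq, sum_range_norm_sum_mul_pow_sq hroot hinj, norm_pow, mul_sum]
  exact sum_congr rfl fun k _ => by rw [norm_subcarrier_sq]; ring

theorem signAverage_srcm_le (hL : 2 ≤ L) (hN : N ≠ 0) (c : Fin N → ℂ) :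
    ((2 : ℝ) ^ N)⁻¹ * ∑ ε : Fin N → Bool, srcm L σb (fun k => c k * (if ε k then 1 else -1))
      ≤ 6 * ((σb ^ 2 * N)⁻¹ * ∑ k, ‖c k‖ ^ 2) ^ 3
        + 9 * ((σb ^ 2 * N)⁻¹ * ∑ k, ‖c k‖ ^ 2) * ((σb ^ 2 * N)⁻¹ ^ 2 * ∑ k, ‖c k‖ ^ 4)
        + 16 * ((σb ^ 2 * N)⁻¹ ^ 3 * ∑ k, ‖c k‖ ^ 6) := by
  set ρ : ℝ := (σb ^ 2 * N)⁻¹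
  set a := subcarrier L σb c
  have hA2 : ∀ n, ∑ k, ‖a n k‖ ^ 2 = ρ * ∑ k, ‖c k‖ ^ 2 := fun n => by
    rw [mul_sum]
    exact sum_congr rfl fun k _ => norm_subcarrier_sq c n k
  have hA6 : ∀ n, ∑ k, ‖a n k‖ ^ 6 = ρ ^ 3 * ∑ k, ‖c k‖ ^ 6 := fun n => by
    simp only [mul_sum]
    exact sum_congr rfl fun k _ => by
      rw [show ‖a n k‖ ^ 6 = (‖a n k‖ ^ 2) ^ 3 by ring, norm_subcarrier_sq]; ring
  have hswap : ((2 : ℝ) ^ N)⁻¹ * ∑ ε : Fin N → Bool,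
      srcm L σb (fun k => c k * (if ε k then 1 else -1))
      = ((L : ℝ) * N)⁻¹ * ∑ n ∈ range (L * N),
          ((2 : ℝ) ^ N)⁻¹ * ∑ ε : Fin N → Bool, ‖signedSum ε (a n)‖ ^ 6 := by
    simp only [srcm, ofdm_mul_sign_eq_signedSum, one_div, ← mul_sum]
    rw [sum_comm]
    ring
  have hparseval : ∑ n ∈ range (L * N), ‖∑ k, a n k ^ 2‖ ^ 2
      = (L * N : ℕ) * (ρ ^ 2 * ∑ k, ‖c k‖ ^ 4) := sum_range_norm_sum_subcarrier_sq_sq hL hN c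
  rw [hswap]
  calc ((L : ℝ) * N)⁻¹ * ∑ n ∈ range (L * N),
          ((2 : ℝ) ^ N)⁻¹ * ∑ ε : Fin N → Bool, ‖signedSum ε (a n)‖ ^ 6
      ≤ ((L : ℝ) * N)⁻¹ * ∑ n ∈ range (L * N), (6 * (ρ * ∑ k, ‖c k‖ ^ 2) ^ 3
          + 9 * (ρ * ∑ k, ‖c k‖ ^ 2) * ‖∑ k, a n k ^ 2‖ ^ 2 + 16 * (ρ ^ 3 * ∑ k, ‖c k‖ ^ 6)) := by
        gcongr with n
        rw [inv_mul_le_iff₀ (by positivity), ← hA2 n, ← hA6 n]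
        exact sum_norm_signedSum_pow_six_le (a n)
    _ = _ := by
        rw [sum_add_distrib, sum_add_distrib, sum_const, sum_const, card_range, nsmul_eq_mul,
          nsmul_eq_mul, ← mul_sum, hparseval]
        push_cast
        field_simp

lemma srcm_nonneg (L : ℕ) (σb : ℝ) (b : Fin N → ℂ) : 0 ≤ srcm L σb b := by
  unfold srcm; positivity

theorem signAverage_srcm_le_of_norm_sq_le (hL : 2 ≤ L) (hN : N ≠ 0) (c : Fin N → ℂ) {B : ℝ}
    (hc : ∀ k, ‖c k‖ ^ 2 ≤ B) :
    ((2 : ℝ) ^ N)⁻¹ * ∑ ε : Fin N → Bool, srcm L σb (fun k => c k * (if ε k then 1 else -1))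
      ≤ 6 * ((σb ^ 2 * N)⁻¹ * ∑ k, ‖c k‖ ^ 2) ^ 3 + 25 * (B / σb ^ 2) ^ 3 / N := by
  refine (signAverage_srcm_le hL hN c).trans ?_
  set ρ : ℝ := (σb ^ 2 * N)⁻¹
  have hρ : 0 ≤ ρ := by positivity
  have hB : 0 ≤ B := (sq_nonneg _).trans (hc ⟨0, Nat.pos_of_ne_zero hN⟩)
  have hsum : ∀ j : ℕ, ∑ k, ‖c k‖ ^ (2 * j) ≤ N * B ^ j := fun j => by
    calc ∑ k, ‖c k‖ ^ (2 * j) = ∑ k, (‖c k‖ ^ 2) ^ j := by simp only [pow_mul]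
      _ ≤ ∑ _k : Fin N, B ^ j := sum_le_sum fun k _ => pow_le_pow_left₀ (sq_nonneg _) (hc k) j
      _ = N * B ^ j := by simp
  have h2 : ρ * ∑ k, ‖c k‖ ^ 2 ≤ ρ * (N * B) := by
    simpa using mul_le_mul_of_nonneg_left (hsum 1) hρ
  have h4 : ρ ^ 2 * ∑ k, ‖c k‖ ^ 4 ≤ ρ ^ 2 * (N * B ^ 2) :=
    mul_le_mul_of_nonneg_left (hsum 2) (by positivity)
  have h6 : ρ ^ 3 * ∑ k, ‖c k‖ ^ 6 ≤ ρ ^ 3 * (N * B ^ 3) :=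
    mul_le_mul_of_nonneg_left (hsum 3) (by positivity)
  have h24 : (ρ * ∑ k, ‖c k‖ ^ 2) * (ρ ^ 2 * ∑ k, ‖c k‖ ^ 4) ≤ ρ ^ 3 * N ^ 2 * B ^ 3 :=
    (mul_le_mul h2 h4 (by positivity) (by positivity)).trans_eq (by ring)
  have hN1 : (N : ℝ) ≤ N ^ 2 := by
    have : (1 : ℝ) ≤ N := by exact_mod_cast Nat.one_le_iff_ne_zero.2 hN
    nlinarith
  have hNB : ρ ^ 3 * (N * B ^ 3) ≤ ρ ^ 3 * N ^ 2 * B ^ 3 := by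
    have := mul_le_mul_of_nonneg_left hN1 (by positivity : 0 ≤ ρ ^ 3 * B ^ 3)
    linarith
  have hρN : ρ ^ 3 * N ^ 2 * B ^ 3 = (B / σb ^ 2) ^ 3 / N := by
    have : (N : ℝ) ≠ 0 := by exact_mod_cast hN
    simp only [ρ, mul_inv, div_eq_mul_inv]
    field_simp
  rw [mul_div_assoc, ← hρN]
  linarith

theorem limsup_srcm_le_six (hL : 2 ≤ L) (hσb : σb ≠ 0) {c : ℕ → ℂ} {B : ℝ}
    (hc : ∀ k, ‖c k‖ ^ 2 ≤ B)
    (hmean : Tendsto (fun N : ℕ => (∑ k ∈ range N, ‖c k‖ ^ 2) / N) atTop (𝓝 (σb ^ 2)))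
    (b : (N : ℕ) → Fin N → ℂ)
    (hb : ∀ N, srcm L σb (b N) ≤ ((2 : ℝ) ^ N)⁻¹ *
      ∑ ε : Fin N → Bool, srcm L σb (fun k : Fin N => c k * (if ε k then 1 else -1))) :
    limsup (fun N => srcm L σb (b N)) atTop ≤ 6 := by
  set g : ℕ → ℝ := fun N =>
    6 * ((σb ^ 2 * N)⁻¹ * ∑ k : Fin N, ‖c k‖ ^ 2) ^ 3 + 25 * (B / σb ^ 2) ^ 3 / N
  have hbg : ∀ᶠ N in atTop, srcm L σb (b N) ≤ g N := eventually_atTop.2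
    ⟨1, fun N hN => (hb N).trans (signAverage_srcm_le_of_norm_sq_le hL (by omega) _ fun k => hc k)⟩
  have hmean' : Tendsto (fun N : ℕ => (σb ^ 2 * N)⁻¹ * ∑ k : Fin N, ‖c k‖ ^ 2) atTop (𝓝 1) := by
    rw [← div_self (pow_ne_zero 2 hσb)]
    refine (hmean.div_const (σb ^ 2)).congr fun N => ?_
    rw [Fin.sum_univ_eq_sum_range (fun k => ‖c k‖ ^ 2)]
    ring
  have hg : Tendsto g atTop (𝓝 6) := by
    have := ((hmean'.pow 3).const_mul 6).add
      (tendsto_const_div_atTop_nhds_zero_nat (25 * (B / σb ^ 2) ^ 3))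
    rwa [one_pow, mul_one, add_zero] at this
  calc limsup (fun N => srcm L σb (b N)) atTop
      ≤ limsup g atTop := limsup_le_limsup hbg
        (isCoboundedUnder_le_of_le atTop fun N => srcm_nonneg L σb (b N)) hg.isBoundedUnder_le
    _ = 6 := hg.limsup_eq

end SRCM

section UniformFinite

variable {Ω α : Type*} [MeasurableSpace Ω] [MeasurableSpace α] [MeasurableSingletonClass α]
  {P : Measure Ω}

lemma ae_mem_of_map_eq_smul_sum_dirac {X : Ω → α} (hX : Measurable X) {s : Finset α} {r : ℝ≥0∞}
    (h : P.map X = r • ∑ y ∈ s, Measure.dirac y) : ∀ᵐ ω ∂P, X ω ∈ s := by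
  rw [← ae_map_iff (p := (· ∈ s)) hX.aemeasurable s.measurableSet, h]
  refine Measure.ae_smul_measure ?_ r
  rw [ae_iff, Measure.coe_finsetSum, Finset.sum_apply]
  exact sum_eq_zero fun y hy => by simp [hy]

lemma integral_smul_sum_dirac (f : α → ℝ) (s : Finset α) (r : ℝ≥0∞) :
    ∫ x, f x ∂(r • ∑ y ∈ s, Measure.dirac y) = r.toReal * ∑ y ∈ s, f y := by
  rw [integral_smul_measure, integral_finsetSum_measure, smul_eq_mul]
  · simp only [integral_dirac]
  · exact fun y _ => integrable_dirac enorm_lt_top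

lemma ae_forall_mem_of_map_eq_smul_sum_dirac {X : ℕ → Ω → α} (hX : ∀ k, Measurable (X k))
    {s : Finset α} {r : ℝ≥0∞} (h : ∀ k, P.map (X k) = r • ∑ y ∈ s, Measure.dirac y) :
    ∀ᵐ ω ∂P, ∀ k, X k ω ∈ s :=
  ae_all_iff.2 fun k => ae_mem_of_map_eq_smul_sum_dirac (hX k) (h k)

theorem ae_tendsto_average_of_map_eq_smul_sum_dirac [IsProbabilityMeasure P] {X : ℕ → Ω → α}
    (hX : ∀ k, Measurable (X k)) (hindep : iIndepFun X P) {s : Finset α} {r : ℝ≥0∞}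
    (h : ∀ k, P.map (X k) = r • ∑ y ∈ s, Measure.dirac y) {f : α → ℝ} (hf : Measurable f) :
    ∀ᵐ ω ∂P, Tendsto (fun N : ℕ => (∑ k ∈ range N, f (X k ω)) / N) atTop
      (𝓝 (r.toReal * ∑ y ∈ s, f y)) := by
  have hbound : ∀ᵐ ω ∂P, ‖f (X 0 ω)‖ ≤ ∑ y ∈ s, ‖f y‖ := by
    filter_upwards [ae_mem_of_map_eq_smul_sum_dirac (hX 0) (h 0)] with ω hω
    exact single_le_sum (f := fun y => ‖f y‖) (fun _ _ => norm_nonneg _) hω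
  have hint : Integrable (fun ω => f (X 0 ω)) P :=
    Integrable.of_bound (hf.comp (hX 0)).aestronglyMeasurable _ hbound
  have hident : ∀ k, IdentDistrib (fun ω => f (X k ω)) (fun ω => f (X 0 ω)) P P := fun k =>
    (IdentDistrib.mk (hX k).aemeasurable (hX 0).aemeasurable (by rw [h, h])).comp hf
  have hmean : ∫ ω, f (X 0 ω) ∂P = r.toReal * ∑ y ∈ s, f y := by
    rw [← integral_map (hX 0).aemeasurable hf.aestronglyMeasurable, h, integral_smul_sum_dirac]
  simpa only [hmean] using strong_law_ae_real (fun k ω => f (X k ω)) hint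
    (fun i j hij => (hindep.indepFun hij).comp hf hf) hident

end UniformFinite

theorem srcm_limsup_le_six_of_ce_guarantee_general
    {Ω : Type*} [MeasurableSpace Ω] (P : Measure Ω) [IsProbabilityMeasure P]
    (L : ℕ) (hL : 2 ≤ L)
    (M' : Finset ℂ)
    (σb : ℝ) (hσb : 0 < σb)
    (hσb2 : σb ^ 2 = (M'.card : ℝ)⁻¹ * ∑ y ∈ M', ‖y‖ ^ 2)
    (C : ℕ → Ω → ℂ) (hCmeas : ∀ k, Measurable (C k))
    (hCindep : iIndepFun C P)
    (hCdist : ∀ k, Measure.map (C k) P = (M'.card : ℝ≥0∞)⁻¹ • ∑ y ∈ M', Measure.dirac y)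
    (xstar : (N : ℕ) → (Fin N → ℂ) → Fin N → ℝ)
    (hxguar : ∀ N, ∀ c : Fin N → ℂ, (∀ k, c k ∈ M') →
      srcm L σb (fun k => c k * (xstar N c k : ℂ)) ≤
        ((2 : ℝ) ^ N)⁻¹ *
          ∑ ε : Fin N → Bool, srcm L σb (fun k => c k * (if ε k then 1 else -1))) :
    ∀ᵐ ω ∂P,
      Filter.limsup
        (fun N : ℕ =>
          srcm L σb (fun k : Fin N => C k ω * (xstar N (fun k' => C k' ω) k : ℂ)))
        Filter.atTop ≤ 6 := by
  filter_upwards [ae_forall_mem_of_map_eq_smul_sum_dirac hCmeas hCdist,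
    ae_tendsto_average_of_map_eq_smul_sum_dirac hCmeas hCindep hCdist
      (measurable_norm.pow_const 2)] with ω hmem hmean
  have hbound : ∀ k, ‖C k ω‖ ^ 2 ≤ ∑ y ∈ M', ‖y‖ ^ 2 := fun k =>
    single_le_sum (f := fun y => ‖y‖ ^ 2) (fun y _ => sq_nonneg _) (hmem k)
  rw [ENNReal.toReal_inv, ENNReal.toReal_natCast, ← hσb2] at hmean
  exact limsup_srcm_le_six hL hσb.ne' hbound hmean _ fun N => hxguar N _ fun k => hmem k

/-- if `x*_N` satisfies the conditional-expectation-method guarantee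
`η_N(c ⊙ x*_N(c)) ≤ 2^{−N} Σ_{x ∈ {−1,1}^N} η_N(c ⊙ x)` for every `c ∈ M'^N`, then almost
surely `limsup_N η_N(C ⊙ x*_N(C)) ≤ 6` for i.i.d. data symbols `C_k` uniform on `M'`. -/
theorem srcm_limsup_le_six_of_ce_guarantee
    {Ω : Type*} [MeasurableSpace Ω] (P : Measure Ω) [IsProbabilityMeasure P]
    (L : ℕ) (hL : 2 ≤ L)
    (M' : Finset ℂ) (hM'ne : M'.Nonempty)
    (hM'sq : ∑ y ∈ M', y ^ 2 = 0)
    (σb : ℝ) (hσb : 0 < σb)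
    (hσb2 : σb ^ 2 = (M'.card : ℝ)⁻¹ * ∑ y ∈ M', ‖y‖ ^ 2)
    (C : ℕ → Ω → ℂ) (hCmeas : ∀ k, Measurable (C k))
    (hCindep : iIndepFun C P)
    (hCdist : ∀ k, Measure.map (C k) P = (M'.card : ℝ≥0∞)⁻¹ • ∑ y ∈ M', Measure.dirac y)
    (xstar : (N : ℕ) → (Fin N → ℂ) → Fin N → ℝ)
    (hxsign : ∀ N, ∀ c : Fin N → ℂ, (∀ k, c k ∈ M') →
      ∀ k, xstar N c k = 1 ∨ xstar N c k = -1)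
    (hxguar : ∀ N, ∀ c : Fin N → ℂ, (∀ k, c k ∈ M') →
      srcm L σb (fun k => c k * (xstar N c k : ℂ)) ≤
        ((2 : ℝ) ^ N)⁻¹ *
          ∑ ε : Fin N → Bool, srcm L σb (fun k => c k * (if ε k then 1 else -1))) :
    ∀ᵐ ω ∂P,
      Filter.limsup
        (fun N : ℕ =>
          srcm L σb (fun k : Fin N => C k ω * (xstar N (fun k' => C k' ω) k : ℂ)))
        Filter.atTop ≤ 6 :=
  srcm_limsup_le_six_of_ce_guarantee_general P L hL M' σb hσb hσb2 C hCmeas hCindep hCdist xstar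
    hxguar
end

section
/- Almost surely, lim_{N→∞} E_X[ (ŝ_i(n_N, (C_0,…,C_{N−1}) ⊙ Y^{(N)}))² ] = (1−α)/2, where E_X denotes expectation over the random signs X_{j_N+1},…,X_{N−1} only (i.e., conditional expectation given (C_k)). -/
/-!
Conditionally on the data `C`, the imaginary part of the sample is an affine function
`c + ∑_{j_N < k < N} u_k X_k` of the random signs, with `u_k = Im (C_k e_k) / (σ_b √N)` and
`e_k` the `k`-th carrier, so its variance over the signs is `∑_{j_N < k < N} u_k²`.
Since `∑_{y ∈ M'} y² = 0`, the variables `Im (C_k e_k)² / σ_b² - 1/2` have mean zero; they are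
independent and bounded, so a fourth-moment strong law for triangular arrays makes their
average over `j_N < k < N` vanish almost surely. What remains is `(N - j_N - 1) / (2N)`,
which tends to `(1 - α) / 2`.
-/

open MeasureTheory ProbabilityTheory Filter Finset
open scoped ENNReal NNReal Topology

/-- The signal sample `s(n, (C_0,…,C_{N−1}) ⊙ Y^{(N)})` where
`Y^{(N)} = (x_0^{(N)},…,x_{j_N}^{(N)}, X_{j_N+1},…,X_{N−1})`: the fixed signs
`x N` may depend on `C_0,…,C_{j_N}` (encoded by feeding `x` the data sequence truncated
after index `j_N`), the random signs `X` live on a second probability space. -/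
noncomputable def ofdmSignedData {Ω₁ Ω₂ : Type*} (L : ℕ) (σb : ℝ) (jN : ℕ → ℕ)
    (C : ℕ → Ω₁ → ℂ) (x : (N : ℕ) → (ℕ → ℂ) → ℕ → ℝ) (X : ℕ → Ω₂ → ℝ)
    (N n : ℕ) (ω₁ : Ω₁) (ω₂ : Ω₂) : ℂ :=
  ofdm L σb (fun k : Fin N =>
    C k ω₁ * (((if (k : ℕ) ≤ jN N
      then x N (fun i => if i ≤ jN N then C i ω₁ else 0) k
      else X k ω₂) : ℝ) : ℂ)) n

section UniformOnFinset

variable {Ω α : Type*} [MeasurableSpace Ω] [MeasurableSpace α] [MeasurableSingletonClass α]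
  {μ : Measure Ω} {f : Ω → α} {S : Finset α}

lemma ae_mem_of_map_eq_uniform (hf : Measurable f)
    (hmap : μ.map f = (#S : ℝ≥0∞)⁻¹ • ∑ y ∈ S, Measure.dirac y) : ∀ᵐ ω ∂μ, f ω ∈ S := by
  refine ae_of_ae_map hf.aemeasurable ?_
  rw [hmap, ae_iff, Measure.smul_apply, Measure.finsetSum_apply]
  simp

lemma integral_comp_of_map_eq_uniform (hf : Measurable f)
    (hmap : μ.map f = (#S : ℝ≥0∞)⁻¹ • ∑ y ∈ S, Measure.dirac y) {h : α → ℝ}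
    (hh : Measurable h) : ∫ ω, h (f ω) ∂μ = (#S : ℝ)⁻¹ * ∑ y ∈ S, h y := by
  rw [← integral_map hf.aemeasurable hh.aestronglyMeasurable, hmap, integral_smul_measure,
    integral_finsetSum_measure fun y _ => integrable_dirac enorm_lt_top]
  simp [integral_dirac]

end UniformOnFinset

section Rademacher

lemma rademacher_eq_uniform :
    (2 : ℝ≥0∞)⁻¹ • (Measure.dirac (1 : ℝ) + Measure.dirac (-1 : ℝ)) =
      (#({1, -1} : Finset ℝ) : ℝ≥0∞)⁻¹ • ∑ y ∈ ({1, -1} : Finset ℝ), Measure.dirac y := by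
  rw [card_pair (by norm_num), sum_pair (by norm_num)]
  norm_num

variable {Ω : Type*} [MeasurableSpace Ω] {μ : Measure Ω} {X : Ω → ℝ}

lemma variance_eq_one_of_map_eq_rademacher (hX : Measurable X)
    (hmap : μ.map X = (2 : ℝ≥0∞)⁻¹ • (Measure.dirac (1 : ℝ) + Measure.dirac (-1 : ℝ))) :
    Var[X; μ] = 1 := by
  rw [rademacher_eq_uniform] at hmap
  have hpair : (1 : ℝ) ≠ -1 := by norm_num
  have hmean : μ[X] = 0 := by
    simpa [card_pair hpair, sum_pair hpair] using
      integral_comp_of_map_eq_uniform hX hmap measurable_id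
  rw [variance_of_integral_eq_zero hX.aemeasurable hmean,
    integral_comp_of_map_eq_uniform (h := fun y => y ^ 2) hX hmap (by fun_prop), card_pair hpair,
    sum_pair hpair]
  norm_num

lemma memLp_of_map_eq_rademacher [IsFiniteMeasure μ] (hX : Measurable X)
    (hmap : μ.map X = (2 : ℝ≥0∞)⁻¹ • (Measure.dirac (1 : ℝ) + Measure.dirac (-1 : ℝ)))
    (p : ℝ≥0∞) : MemLp X p μ := by
  rw [rademacher_eq_uniform] at hmap
  refine .of_bound hX.aestronglyMeasurable 1 ?_
  filter_upwards [ae_mem_of_map_eq_uniform hX hmap] with ω hω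
  rcases mem_insert.mp hω with h | h <;> simp_all

end Rademacher

lemma variance_const_add_sum_mul {Ω ι : Type*} [MeasurableSpace Ω] {μ : Measure Ω}
    [IsProbabilityMeasure μ] {X : ι → Ω → ℝ} (hX : ∀ k, MemLp (X k) 2 μ)
    (hindep : iIndepFun X μ) (c : ℝ) (s : Finset ι) (u : ι → ℝ) :
    Var[fun ω => c + ∑ k ∈ s, u k * X k ω; μ] = ∑ k ∈ s, u k ^ 2 * Var[X k; μ] := by
  have hsum : (fun ω => ∑ k ∈ s, u k * X k ω) = ∑ k ∈ s, (fun ω => u k * X k ω) := by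
    ext ω; simp
  rw [variance_const_add, hsum, IndepFun.variance_sum]
  · simp only [variance_const_mul]
  · exact fun k _ => (hX k).const_mul (u k)
  · intro i _ j _ hij
    exact (hindep.indepFun hij).comp (measurable_const_mul (u i)) (measurable_const_mul (u j))
  · exact (Finset.aestronglyMeasurable_fun_sum _ fun k _ => ((hX k).1.const_mul (u k)))

section FourthMoment

variable {Ω ι : Type*} [MeasurableSpace Ω] {μ : Measure Ω}

lemma ProbabilityTheory.IndepFun.integral_add_pow [IsFiniteMeasure μ] {Y Z : Ω → ℝ}
    (h : IndepFun Y Z μ) (hY : Measurable Y) (hZ : Measurable Z) {a b : ℝ}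
    (hYb : ∀ᵐ ω ∂μ, |Y ω| ≤ a) (hZb : ∀ᵐ ω ∂μ, |Z ω| ≤ b) (n : ℕ) :
    ∫ ω, (Y ω + Z ω) ^ n ∂μ =
      ∑ i ∈ range (n + 1), (∫ ω, Y ω ^ i ∂μ) * (∫ ω, Z ω ^ (n - i) ∂μ) * n.choose i := by
  simp_rw [add_pow]
  rw [integral_finsetSum]
  · refine sum_congr rfl fun i _ => ?_
    rw [integral_mul_const, h.integral_fun_comp_mul_comp (f := (· ^ i)) (g := (· ^ (n - i)))
      hY.aemeasurable hZ.aemeasurable (by fun_prop) (by fun_prop)]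
  · intro i _
    refine .of_bound (by fun_prop) (a ^ i * b ^ (n - i) * n.choose i) ?_
    filter_upwards [hYb, hZb] with ω hYω hZω
    simp only [norm_mul, norm_pow, Real.norm_eq_abs, Nat.abs_cast]
    have := (abs_nonneg _).trans hYω
    gcongr

variable {ξ : ι → Ω → ℝ} {B : ℝ}

lemma ae_abs_sum_le (hbd : ∀ k, ∀ᵐ ω ∂μ, |ξ k ω| ≤ B) (s : Finset ι) :
    ∀ᵐ ω ∂μ, |∑ k ∈ s, ξ k ω| ≤ #s * B := by
  filter_upwards [(eventually_all_finset s).mpr fun k _ => hbd k] with ω hω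
  calc |∑ k ∈ s, ξ k ω| ≤ ∑ k ∈ s, |ξ k ω| := abs_sum_le_sum_abs _ _
    _ ≤ ∑ _k ∈ s, B := sum_le_sum hω
    _ = #s * B := by rw [sum_const, nsmul_eq_mul]

variable (hmeas : ∀ k, Measurable (ξ k)) (hindep : iIndepFun ξ μ)
  (hmean : ∀ k, ∫ ω, ξ k ω ∂μ = 0) (hbd : ∀ k, ∀ᵐ ω ∂μ, |ξ k ω| ≤ B)

include hmeas hindep in
lemma indepFun_sum_of_notMem {s : Finset ι} {a : ι} (ha : a ∉ s) :
    IndepFun (fun ω => ∑ k ∈ s, ξ k ω) (ξ a) μ := by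
  simpa [Finset.sum_fn] using hindep.indepFun_finsetSum_of_notMem hmeas ha

variable [IsProbabilityMeasure μ]

lemma integral_pow_le_of_abs_le {f : Ω → ℝ} (hf : ∀ᵐ ω ∂μ, |f ω| ≤ B)
    (n : ℕ) : ∫ ω, f ω ^ n ∂μ ≤ B ^ n := by
  have hfn : ∀ᵐ ω ∂μ, ‖f ω ^ n‖ ≤ B ^ n := hf.mono fun ω hω => by
    rw [norm_pow, Real.norm_eq_abs]
    exact pow_le_pow_left₀ (abs_nonneg _) hω n
  refine (le_abs_self _).trans ?_
  simpa using norm_integral_le_of_norm_le_const hfn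

include hmeas hmean hbd in
lemma integral_sum_eq_zero (s : Finset ι) : ∫ ω, ∑ k ∈ s, ξ k ω ∂μ = 0 := by
  rw [integral_finsetSum _ fun k _ => .of_bound (hmeas k).aestronglyMeasurable B (hbd k)]
  exact sum_eq_zero fun k _ => hmean k

include hmeas hindep hmean hbd in
lemma integral_sum_sq_le (s : Finset ι) : ∫ ω, (∑ k ∈ s, ξ k ω) ^ 2 ∂μ ≤ #s * B ^ 2 := by
  classical
  induction s using Finset.induction_on with
  | empty => simp
  | insert a s ha ih =>
    have hexp : ∫ ω, (∑ k ∈ s, ξ k ω + ξ a ω) ^ 2 ∂μ =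
        ∫ ω, ξ a ω ^ 2 ∂μ + ∫ ω, (∑ k ∈ s, ξ k ω) ^ 2 ∂μ := by
      rw [(indepFun_sum_of_notMem hmeas hindep ha).integral_add_pow
        (measurable_sum s fun k _ => hmeas k) (hmeas a) (ae_abs_sum_le hbd s) (hbd a)]
      simp [sum_range_succ, hmean, integral_sum_eq_zero hmeas hmean hbd]
    simp_rw [sum_insert ha, add_comm (ξ a _), hexp, card_insert_of_notMem ha]
    have := integral_pow_le_of_abs_le (hbd a) 2
    push_cast
    linarith

include hmeas hindep hmean hbd in
lemma integral_sum_pow_four_le (s : Finset ι) :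
    ∫ ω, (∑ k ∈ s, ξ k ω) ^ 4 ∂μ ≤ 3 * #s ^ 2 * B ^ 4 := by
  classical
  induction s using Finset.induction_on with
  | empty => simp
  | insert a s ha ih =>
    have hexp : ∫ ω, (∑ k ∈ s, ξ k ω + ξ a ω) ^ 4 ∂μ = ∫ ω, ξ a ω ^ 4 ∂μ +
        (∫ ω, (∑ k ∈ s, ξ k ω) ^ 2 ∂μ) * (∫ ω, ξ a ω ^ 2 ∂μ) * 6 +
          ∫ ω, (∑ k ∈ s, ξ k ω) ^ 4 ∂μ := by
      rw [(indepFun_sum_of_notMem hmeas hindep ha).integral_add_pow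
        (measurable_sum s fun k _ => hmeas k) (hmeas a) (ae_abs_sum_le hbd s) (hbd a)]
      simp [sum_range_succ, hmean, integral_sum_eq_zero hmeas hmean hbd, Nat.choose]
    simp_rw [sum_insert ha, add_comm (ξ a _), hexp, card_insert_of_notMem ha]
    have hsq : (∫ ω, (∑ k ∈ s, ξ k ω) ^ 2 ∂μ) * ∫ ω, ξ a ω ^ 2 ∂μ ≤ (#s * B ^ 2) * B ^ 2 :=
      mul_le_mul (integral_sum_sq_le hmeas hindep hmean hbd s)
        (integral_pow_le_of_abs_le (hbd a) 2) (integral_nonneg fun ω => sq_nonneg _)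
        (by positivity)
    have h4 := integral_pow_le_of_abs_le (hbd a) 4
    push_cast
    nlinarith [sq_nonneg B, pow_two_nonneg (B ^ 2)]

end FourthMoment

section StrongLaw

variable {Ω ι : Type*} [MeasurableSpace Ω] {μ : Measure Ω}

lemma ae_tendsto_zero_of_summable_integral_abs_pow {Y : ℕ → Ω → ℝ} {p : ℕ} (hp : p ≠ 0)
    (hint : ∀ N, Integrable (fun ω => |Y N ω| ^ p) μ)
    (hsum : Summable fun N => ∫ ω, |Y N ω| ^ p ∂μ) :
    ∀ᵐ ω ∂μ, Tendsto (fun N => Y N ω) atTop (𝓝 0) := by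
  set f : ℕ → Ω → ℝ≥0∞ := fun N ω => ENNReal.ofReal (|Y N ω| ^ p)
  have hf : ∀ N, AEMeasurable (f N) μ := fun N => (hint N).aemeasurable.ennreal_ofReal
  have hlint : ∫⁻ ω, ∑' N, f N ω ∂μ ≠ ∞ := by
    rw [lintegral_tsum hf]
    have hN : ∀ N, ∫⁻ ω, f N ω ∂μ = ENNReal.ofReal (∫ ω, |Y N ω| ^ p ∂μ) := fun N =>
      (ofReal_integral_eq_lintegral_ofReal (hint N) (ae_of_all _ fun ω => by positivity)).symm
    simp_rw [hN]
    rw [← ENNReal.ofReal_tsum_of_nonneg (fun N => by positivity) hsum]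
    exact ENNReal.ofReal_ne_top
  filter_upwards [ae_lt_top' (AEMeasurable.tsum hf) hlint] with ω hω
  have hpow : Tendsto (fun N => |Y N ω| ^ p) atTop (𝓝 0) := by
    have := (ENNReal.tendsto_toReal ENNReal.zero_ne_top).comp
      (ENNReal.tendsto_atTop_zero_of_tsum_ne_top hω.ne)
    simpa [f, Function.comp_def, ENNReal.toReal_ofReal, abs_nonneg] using this
  have hroot := hpow.rpow_const (p := (p : ℝ)⁻¹) (Or.inr (by positivity))
  rw [Real.zero_rpow (by positivity)] at hroot
  refine tendsto_zero_iff_abs_tendsto_zero _ |>.mpr ?_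
  simpa [Function.comp_def, Real.pow_rpow_inv_natCast (abs_nonneg _) hp] using hroot

theorem ae_tendsto_sum_div_atTop_zero [IsProbabilityMeasure μ] {ξ : ℕ → ι → Ω → ℝ} {B : ℝ}
    (hmeas : ∀ N k, Measurable (ξ N k)) (hindep : ∀ N, iIndepFun (ξ N) μ)
    (hmean : ∀ N k, ∫ ω, ξ N k ω ∂μ = 0) (hbd : ∀ N k, ∀ᵐ ω ∂μ, |ξ N k ω| ≤ B)
    (s : ℕ → Finset ι) (hs : ∀ N, #(s N) ≤ N) :
    ∀ᵐ ω ∂μ, Tendsto (fun N : ℕ => (∑ k ∈ s N, ξ N k ω) / N) atTop (𝓝 0) := by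
  have habs : ∀ N ω, |(∑ k ∈ s N, ξ N k ω) / N| ^ 4 = (∑ k ∈ s N, ξ N k ω) ^ 4 / N ^ 4 := by
    intro N ω
    rw [(by decide : Even 4).pow_abs, div_pow]
  refine ae_tendsto_zero_of_summable_integral_abs_pow four_ne_zero (fun N => ?_) ?_
  · refine .of_bound (by fun_prop) ((#(s N) * B / N) ^ 4) ?_
    filter_upwards [ae_abs_sum_le (hbd N) (s N)] with ω hω
    rw [Real.norm_eq_abs, abs_of_nonneg (by positivity), abs_div, Nat.abs_cast]
    gcongr
  · refine Summable.of_nonneg_of_le (fun N => integral_nonneg fun ω => by positivity)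
      (fun N => ?_) ((Real.summable_one_div_nat_pow.mpr one_lt_two).mul_left (3 * B ^ 4))
    simp_rw [habs, integral_div]
    rcases N.eq_zero_or_pos with rfl | hN
    · simp
    calc (∫ ω, (∑ k ∈ s N, ξ N k ω) ^ 4 ∂μ) / N ^ 4 ≤ 3 * (N : ℝ) ^ 2 * B ^ 4 / N ^ 4 := by
          gcongr
          refine (integral_sum_pow_four_le (hmeas N) (hindep N) (hmean N) (hbd N) _).trans ?_
          gcongr
          exact_mod_cast hs N
      _ = 3 * B ^ 4 * (1 / N ^ 2) := by
          field_simp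

end StrongLaw

noncomputable def ofdmCarrier (L N n k : ℕ) : ℂ :=
  Complex.exp (2 * Real.pi * Complex.I * k * n / ((L : ℂ) * (N : ℂ)))

lemma norm_ofdmCarrier (L N n k : ℕ) : ‖ofdmCarrier L N n k‖ = 1 := by
  rw [ofdmCarrier, show 2 * Real.pi * Complex.I * k * n / ((L : ℂ) * (N : ℂ))
      = ((2 * Real.pi * k * n / (L * N) : ℝ) : ℂ) * Complex.I by push_cast; ring]
  exact Complex.norm_exp_ofReal_mul_I _

lemma im_ofdmSignedData_eq_const_add {Ω₁ Ω₂ : Type*} (L : ℕ) (σb : ℝ) (jN : ℕ → ℕ)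
    (C : ℕ → Ω₁ → ℂ) (x : (N : ℕ) → (ℕ → ℂ) → ℕ → ℝ) (X : ℕ → Ω₂ → ℝ) (N n : ℕ) (ω₁ : Ω₁) :
    ∃ c : ℝ, ∀ ω₂, (ofdmSignedData L σb jN C x X N n ω₁ ω₂).im =
      c + ∑ k ∈ (range N).filter (jN N < ·),
        (C k ω₁ * ofdmCarrier L N n k).im / (σb * √N) * X k ω₂ := by
  set a : ℕ → ℝ := fun k => (C k ω₁ * ofdmCarrier L N n k).im / (σb * √N)
  refine ⟨∑ k ∈ (range N).filter (· ≤ jN N),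
    a k * x N (fun i => if i ≤ jN N then C i ω₁ else 0) k, fun ω₂ => ?_⟩
  have hterm : ∀ k : ℕ, ∀ t : ℝ,
      (C k ω₁ * (t : ℂ) * ofdmCarrier L N n k).im / (σb * √N) = a k * t := by
    intro k t
    simp only [a, mul_right_comm _ (t : ℂ), Complex.im_mul_ofReal]
    ring
  simp only [ofdmSignedData, ofdm, Complex.im_ofReal_mul, Complex.im_sum, ← ofdmCarrier.eq_1,
    mul_sum]
  rw [Fin.sum_univ_eq_sum_range (fun k => 1 / (σb * √N) * (C k ω₁ *
      ((if k ≤ jN N then x N (fun i => if i ≤ jN N then C i ω₁ else 0) k else X k ω₂ : ℝ) : ℂ) *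
      ofdmCarrier L N n k).im), ← sum_filter_add_sum_filter_not (range N) (· ≤ jN N)]
  simp only [not_le]
  congr 1 <;> refine sum_congr rfl fun k hk => ?_ <;> rw [mem_filter] at hk
  · rw [if_pos hk.2, ← hterm]
    ring
  · rw [if_neg (not_le.mpr hk.2), ← hterm]
    ring

lemma integral_sq_sub_integral_im_ofdmSignedData {Ω₁ Ω₂ : Type*} [MeasurableSpace Ω₂]
    {ν : Measure Ω₂} [IsProbabilityMeasure ν] (L : ℕ) (σb : ℝ) (jN : ℕ → ℕ)
    (C : ℕ → Ω₁ → ℂ) (x : (N : ℕ) → (ℕ → ℂ) → ℕ → ℝ) {X : ℕ → Ω₂ → ℝ}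
    (hXmeas : ∀ k, Measurable (X k)) (hXindep : iIndepFun X ν)
    (hXdist : ∀ k, Measure.map (X k) ν =
      (2 : ℝ≥0∞)⁻¹ • (Measure.dirac (1 : ℝ) + Measure.dirac (-1 : ℝ)))
    (N n : ℕ) (ω₁ : Ω₁) :
    ∫ ω₂, ((ofdmSignedData L σb jN C x X N n ω₁ ω₂).im -
        ∫ ω₂', (ofdmSignedData L σb jN C x X N n ω₁ ω₂').im ∂ν) ^ 2 ∂ν =
      ∑ k ∈ (range N).filter (jN N < ·), (C k ω₁ * ofdmCarrier L N n k).im ^ 2 / (σb ^ 2 * N) := by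
  obtain ⟨c, hc⟩ := im_ofdmSignedData_eq_const_add L σb jN C x X N n ω₁
  simp only [hc]
  rw [← variance_eq_integral (by fun_prop), variance_const_add_sum_mul
    (fun k => memLp_of_map_eq_rademacher (hXmeas k) (hXdist k) 2) hXindep]
  refine sum_congr rfl fun k _ => ?_
  rw [variance_eq_one_of_map_eq_rademacher (hXmeas k) (hXdist k), mul_one, div_pow, mul_pow,
    Real.sq_sqrt N.cast_nonneg]

lemma tendsto_card_filter_floor_mul_lt_div {α : ℝ} (hα0 : 0 ≤ α) (hα1 : α ≤ 1) :
    Tendsto (fun N : ℕ => (#((range N).filter (⌊α * N⌋₊ < ·)) : ℝ) / N) atTop (𝓝 (1 - α)) := by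
  have hcard : ∀ N : ℕ, (N : ℝ) - ⌊α * N⌋₊ - 1 ≤ #((range N).filter (⌊α * N⌋₊ < ·)) ∧
      (#((range N).filter (⌊α * N⌋₊ < ·)) : ℝ) ≤ N - ⌊α * N⌋₊ := by
    intro N
    have hIco : (range N).filter (⌊α * N⌋₊ < ·) = Ico (⌊α * N⌋₊ + 1) N := by
      ext k
      simp only [mem_filter, mem_range, mem_Ico]
      omega
    have hle : ⌊α * N⌋₊ ≤ N := Nat.floor_le_of_le (by nlinarith [N.cast_nonneg (α := ℝ)])
    rw [hIco, Nat.card_Ico]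
    rcases le_or_gt (⌊α * N⌋₊ + 1) N with h | h
    · push_cast [Nat.cast_sub h]
      constructor <;> linarith
    · rw [Nat.sub_eq_zero_of_le h.le, show ⌊α * N⌋₊ = N by omega]
      norm_num
  have hfloor : Tendsto (fun N : ℕ => (⌊α * N⌋₊ : ℝ) / N) atTop (𝓝 α) :=
    (tendsto_nat_floor_mul_div_atTop hα0).comp tendsto_natCast_atTop_atTop
  have hlower := ((tendsto_const_nhds (x := (1 : ℝ))).sub hfloor).sub
    tendsto_one_div_atTop_nhds_zero_nat
  rw [sub_zero] at hlower
  refine tendsto_of_tendsto_of_tendsto_of_le_of_le' hlower (tendsto_const_nhds.sub hfloor)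
    ?_ ?_ <;> filter_upwards [eventually_gt_atTop 0] with N hN
  · rw [one_sub_div (by positivity), ← sub_div]
    gcongr
    exact (hcard N).1
  · rw [one_sub_div (by positivity)]
    gcongr
    exact (hcard N).2

section Constellation

variable {M : Finset ℂ} {σ : ℝ} {e : ℂ}

lemma sum_sq_im_mul_eq_half (hM : ∑ y ∈ M, y ^ 2 = 0) (he : ‖e‖ = 1) :
    ∑ y ∈ M, (y * e).im ^ 2 = (∑ y ∈ M, ‖y‖ ^ 2) / 2 := by
  have him : ∀ z : ℂ, z.im ^ 2 = (‖z‖ ^ 2 - (z ^ 2).re) / 2 := fun z => by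
    rw [Complex.sq_norm, Complex.normSq_apply, sq z, Complex.mul_re]
    ring
  have hre : ∑ y ∈ M, ((y * e) ^ 2).re = 0 := by
    simp_rw [← Complex.re_sum, mul_pow, ← sum_mul, hM, zero_mul, Complex.zero_re]
  simp_rw [him, ← sum_div, sum_sub_distrib, hre, sub_zero, norm_mul, he, mul_one]

lemma sum_sq_norm_eq_card_mul (hσ : σ ^ 2 = (#M : ℝ)⁻¹ * ∑ y ∈ M, ‖y‖ ^ 2) :
    ∑ y ∈ M, ‖y‖ ^ 2 = #M * σ ^ 2 := by
  rcases M.eq_empty_or_nonempty with rfl | hne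
  · simp
  rw [hσ, mul_inv_cancel_left₀ (by simpa using hne.card_pos.ne')]

lemma sum_sq_im_mul_div_sub_half_eq_zero (hM : ∑ y ∈ M, y ^ 2 = 0) (hσ0 : σ ≠ 0)
    (hσ : σ ^ 2 = (#M : ℝ)⁻¹ * ∑ y ∈ M, ‖y‖ ^ 2) (he : ‖e‖ = 1) :
    ∑ y ∈ M, ((y * e).im ^ 2 / σ ^ 2 - 1 / 2) = 0 := by
  rw [sum_sub_distrib, ← sum_div, sum_sq_im_mul_eq_half hM he, sum_sq_norm_eq_card_mul hσ,
    sum_const, nsmul_eq_mul]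
  field_simp
  ring

lemma abs_sq_im_mul_div_sub_half_le (hσ0 : σ ≠ 0)
    (hσ : σ ^ 2 = (#M : ℝ)⁻¹ * ∑ y ∈ M, ‖y‖ ^ 2) (he : ‖e‖ = 1) {y : ℂ} (hy : y ∈ M) :
    |(y * e).im ^ 2 / σ ^ 2 - 1 / 2| ≤ (#M : ℝ) := by
  have hcard : (1 : ℝ) ≤ #M := by exact_mod_cast card_pos.mpr ⟨y, hy⟩
  have hle : (y * e).im ^ 2 / σ ^ 2 ≤ (#M : ℝ) := by
    rw [div_le_iff₀ (by positivity), ← sum_sq_norm_eq_card_mul hσ]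
    calc (y * e).im ^ 2 ≤ ‖y * e‖ ^ 2 := by
          rw [← sq_abs]; gcongr; exact Complex.abs_im_le_norm _
      _ = ‖y‖ ^ 2 := by rw [norm_mul, he, mul_one]
      _ ≤ ∑ y ∈ M, ‖y‖ ^ 2 := single_le_sum (f := fun y => ‖y‖ ^ 2) (fun y _ => by positivity) hy
  rw [abs_le]
  constructor <;> nlinarith [div_nonneg (sq_nonneg (y * e).im) (sq_nonneg σ)]

end Constellation

theorem variance_im_tendsto_general
    {Ω₁ Ω₂ : Type*} [MeasurableSpace Ω₁] [MeasurableSpace Ω₂]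
    (μ : Measure Ω₁) [IsProbabilityMeasure μ] (ν : Measure Ω₂) [IsProbabilityMeasure ν]
    (L : ℕ)
    (M' : Finset ℂ)
    (hM'sq : ∑ y ∈ M', y ^ 2 = 0)
    (σb : ℝ) (hσb : 0 < σb)
    (hσb2 : σb ^ 2 = (M'.card : ℝ)⁻¹ * ∑ y ∈ M', ‖y‖ ^ 2)
    (C : ℕ → Ω₁ → ℂ) (hCmeas : ∀ k, Measurable (C k))
    (hCindep : iIndepFun C μ)
    (hCdist : ∀ k, Measure.map (C k) μ = (M'.card : ℝ≥0∞)⁻¹ • ∑ y ∈ M', Measure.dirac y)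
    (α : ℝ) (hα0 : 0 ≤ α) (hα1 : α ≤ 1)
    (jN : ℕ → ℕ) (hjN : ∀ N, jN N = Nat.floor (α * N))
    (x : (N : ℕ) → (ℕ → ℂ) → ℕ → ℝ)
    (X : ℕ → Ω₂ → ℝ) (hXmeas : ∀ k, Measurable (X k))
    (hXindep : iIndepFun X ν)
    (hXdist : ∀ k, Measure.map (X k) ν =
      (2 : ℝ≥0∞)⁻¹ • (Measure.dirac (1 : ℝ) + Measure.dirac (-1 : ℝ)))
    (n : ℕ → ℕ) :
    ∀ᵐ ω₁ ∂μ,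
      Tendsto (fun N : ℕ =>
          ∫ ω₂, ((ofdmSignedData L σb jN C x X N (n N) ω₁ ω₂).im -
            ∫ ω₂', (ofdmSignedData L σb jN C x X N (n N) ω₁ ω₂').im ∂ν) ^ 2 ∂ν)
        atTop (nhds ((1 - α) / 2)) := by
  set g : ℕ → ℕ → ℂ → ℝ := fun N k y => (y * ofdmCarrier L N (n N) k).im ^ 2 / σb ^ 2 - 1 / 2
  have hg : ∀ N k, Measurable (g N k) := fun N k => by fun_prop
  have hlaw := ae_tendsto_sum_div_atTop_zero (ξ := fun N k ω => g N k (C k ω)) (B := #M')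
    (fun N k => (hg N k).comp (hCmeas k)) (fun N => hCindep.comp _ (hg N))
    (fun N k => by
      rw [integral_comp_of_map_eq_uniform (hCmeas k) (hCdist k) (hg N k),
        sum_sq_im_mul_div_sub_half_eq_zero hM'sq hσb.ne' hσb2 (norm_ofdmCarrier ..), mul_zero])
    (fun N k => (ae_mem_of_map_eq_uniform (hCmeas k) (hCdist k)).mono fun ω hω =>
      abs_sq_im_mul_div_sub_half_le hσb.ne' hσb2 (norm_ofdmCarrier ..) hω)
    (fun N => (range N).filter (jN N < ·)) (fun N => (card_filter_le _ _).trans (card_range N).le)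
  have hcount := (tendsto_card_filter_floor_mul_lt_div hα0 hα1).div_const 2
  simp_rw [← hjN] at hcount
  filter_upwards [hlaw] with ω hω
  simp_rw [integral_sq_sub_integral_im_ofdmSignedData L σb jN C x hXmeas hXindep hXdist]
  convert hcount.add hω using 1
  · ext N
    simp only [g, sum_sub_distrib, ← sum_div, sum_const, nsmul_eq_mul]
    ring
  · rw [add_zero]

/-- almost surely in the data symbols,
`lim_{N→∞} E_X[ (ŝ_i(n_N, C ⊙ Y^{(N)}))² ] = (1−α)/2`, where `E_X` is the expectation
over the random signs only (here: the integral over the second probability space `ν`),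
and `ŝ_i` is the imaginary part of the signal sample centered by its `E_X`-expectation. -/
theorem variance_im_tendsto
    {Ω₁ Ω₂ : Type*} [MeasurableSpace Ω₁] [MeasurableSpace Ω₂]
    (μ : Measure Ω₁) [IsProbabilityMeasure μ] (ν : Measure Ω₂) [IsProbabilityMeasure ν]
    (L : ℕ) (hL : 2 ≤ L)
    (M' : Finset ℂ) (hM'ne : M'.Nonempty)
    (hM'sq : ∑ y ∈ M', y ^ 2 = 0)
    (σb : ℝ) (hσb : 0 < σb)
    (hσb2 : σb ^ 2 = (M'.card : ℝ)⁻¹ * ∑ y ∈ M', ‖y‖ ^ 2)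
    (C : ℕ → Ω₁ → ℂ) (hCmeas : ∀ k, Measurable (C k))
    (hCindep : iIndepFun C μ)
    (hCdist : ∀ k, Measure.map (C k) μ = (M'.card : ℝ≥0∞)⁻¹ • ∑ y ∈ M', Measure.dirac y)
    (α : ℝ) (hα0 : 0 ≤ α) (hα1 : α ≤ 1) (hαrat : ∃ q : ℚ, (q : ℝ) = α)
    (jN : ℕ → ℕ) (hjN : ∀ N, jN N = Nat.floor (α * N))
    (x : (N : ℕ) → (ℕ → ℂ) → ℕ → ℝ) (hx : ∀ N c k, x N c k = 1 ∨ x N c k = -1)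
    (X : ℕ → Ω₂ → ℝ) (hXmeas : ∀ k, Measurable (X k))
    (hXindep : iIndepFun X ν)
    (hXdist : ∀ k, Measure.map (X k) ν =
      (2 : ℝ≥0∞)⁻¹ • (Measure.dirac (1 : ℝ) + Measure.dirac (-1 : ℝ)))
    (n : ℕ → ℕ) (hn : ∀ N, n N < L * N) :
    ∀ᵐ ω₁ ∂μ,
      Tendsto (fun N : ℕ =>
          ∫ ω₂, ((ofdmSignedData L σb jN C x X N (n N) ω₁ ω₂).im -
            ∫ ω₂', (ofdmSignedData L σb jN C x X N (n N) ω₁ ω₂').im ∂ν) ^ 2 ∂ν)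
        atTop (nhds ((1 - α) / 2)) :=
  variance_im_tendsto_general μ ν L M' hM'sq σb hσb hσb2 C hCmeas hCindep hCdist α hα0 hα1 jN hjN x
    X hXmeas hXindep hXdist n
end

section
/- (1/(LN)) Σ_{n=0}^{LN−1} E[|S_n|^6] = (σ^6/(LN)) Σ_{n=0}^{LN−1} (λ_n³ + 18λ_n² + 72λ_n + 48); i.e., under the Gaussian model for the signal samples, the expected SRCM admits the closed-form expression used by the sign-decision rule. -/
open MeasureTheory ProbabilityTheory Finset

/-!
Stein's identity `E[(X - μ) f(X)] = v E[f'(X)]` for `X ~ N(μ, v)`, obtained by integrating by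
parts against the Gaussian density, gives the moment recursion
`E[X^(k+2)] = μ E[X^(k+1)] + (k+1) v E[X^k]`.  The real and imaginary parts of
`S = μ + σ (G_r + i G_i)` are independent with laws `N(Re μ, σ²)` and `N(Im μ, σ²)`, so after
expanding `|S|^6 = (A² + B²)³` every mixed moment factors, and the moments of order 2, 4, 6
assemble into `|μ|^6 + 18 |μ|^4 σ² + 72 |μ|² σ⁴ + 48 σ⁶`.
-/

open scoped NNReal

namespace ProbabilityTheory

lemma integrable_gaussianPDFReal_mul_of_integrable {μ : ℝ} {v : ℝ≥0} (hv : v ≠ 0) {f : ℝ → ℝ}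
    (hf : Integrable f (gaussianReal μ v)) :
    Integrable (fun x ↦ gaussianPDFReal μ v x * f x) := by
  rw [gaussianReal_of_var_ne_zero _ hv,
    integrable_withDensity_iff_integrable_smul' (measurable_gaussianPDF μ v)
      (ae_of_all _ fun _ ↦ gaussianPDF_lt_top)] at hf
  simpa [gaussianPDF, ENNReal.toReal_ofReal (gaussianPDFReal_nonneg μ v _)] using hf

lemma hasDerivAt_gaussianPDFReal (μ : ℝ) {v : ℝ≥0} (hv : v ≠ 0) (x : ℝ) :
    HasDerivAt (gaussianPDFReal μ v) (-((x - μ) / v) * gaussianPDFReal μ v x) x := by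
  have hv' : (v : ℝ) ≠ 0 := by exact_mod_cast hv
  have hexp : HasDerivAt (fun y ↦ -(y - μ) ^ 2 / (2 * v)) (-((x - μ) / v)) x := by
    refine ((((hasDerivAt_id' x).sub_const μ).fun_pow 2).neg.div_const (2 * (v : ℝ))).congr_deriv ?_
    field_simp
    ring
  rw [gaussianPDFReal_def]
  exact (hexp.exp.const_mul _).congr_deriv (by ring)

theorem integral_sub_mul_gaussianReal (μ : ℝ) (v : ℝ≥0) {f f' : ℝ → ℝ}
    (hf' : ∀ x, HasDerivAt f (f' x) x) (hf : Integrable f (gaussianReal μ v))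
    (hxf : Integrable (fun x ↦ (x - μ) * f x) (gaussianReal μ v))
    (hdf : Integrable f' (gaussianReal μ v)) :
    ∫ x, (x - μ) * f x ∂gaussianReal μ v = v * ∫ x, f' x ∂gaussianReal μ v := by
  rcases eq_or_ne v 0 with rfl | hv
  · simp [gaussianReal_zero_var]
  have hv' : (v : ℝ) ≠ 0 := by exact_mod_cast hv
  have hpdf := hasDerivAt_gaussianPDFReal μ hv
  have hparts := integral_mul_deriv_eq_deriv_mul_of_integrable (fun x _ ↦ hf' x) (fun x _ ↦ hpdf x)
    ?_ ?_ ?_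
  · rw [integral_gaussianReal_eq_integral_smul hv, integral_gaussianReal_eq_integral_smul hv]
    calc ∫ x, gaussianPDFReal μ v x • ((x - μ) * f x)
        = -v * ∫ x, f x * (-((x - μ) / v) * gaussianPDFReal μ v x) := by
          rw [← integral_const_mul]
          congr 1 with x
          simp only [smul_eq_mul]
          field_simp
      _ = v * ∫ x, gaussianPDFReal μ v x • f' x := by
          simp only [hparts, smul_eq_mul, mul_comm (f' _)]
          ring
  · refine ((integrable_gaussianPDFReal_mul_of_integrable hv hxf).const_mul (-(v : ℝ)⁻¹)).congr
      (ae_of_all _ fun x ↦ ?_)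
    simp only [Pi.mul_apply]
    field_simp
  · simpa only [Pi.mul_def, mul_comm] using integrable_gaussianPDFReal_mul_of_integrable hv hdf
  · simpa only [Pi.mul_def, mul_comm] using integrable_gaussianPDFReal_mul_of_integrable hv hf

lemma integrable_pow_gaussianReal (μ : ℝ) (v : ℝ≥0) (k : ℕ) :
    Integrable (fun x ↦ x ^ k) (gaussianReal μ v) :=
  integrable_pow_of_integrable_exp_mul (X := id) one_ne_zero (integrable_exp_mul_gaussianReal 1)
    (integrable_exp_mul_gaussianReal (-1)) k

theorem integral_pow_add_two_gaussianReal (μ : ℝ) (v : ℝ≥0) (k : ℕ) :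
    ∫ x, x ^ (k + 2) ∂gaussianReal μ v =
      μ * ∫ x, x ^ (k + 1) ∂gaussianReal μ v + (k + 1) * v * ∫ x, x ^ k ∂gaussianReal μ v := by
  have hint := integrable_pow_gaussianReal μ v
  have hsub : (fun x : ℝ ↦ (x - μ) * x ^ (k + 1)) = fun x ↦ x ^ (k + 2) - μ * x ^ (k + 1) := by
    ext x
    ring
  have stein := integral_sub_mul_gaussianReal μ v (f := fun x ↦ x ^ (k + 1))
    (fun x ↦ by simpa using hasDerivAt_pow (k + 1) x) (hint _)
    (hsub ▸ (hint (k + 2)).sub ((hint (k + 1)).const_mul μ)) ((hint k).const_mul _)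
  rw [hsub, integral_sub (hint _) ((hint _).const_mul μ), integral_const_mul,
    integral_const_mul] at stein
  linear_combination stein

section Moments

variable (μ : ℝ) (v : ℝ≥0)

lemma integral_sq_gaussianReal : ∫ x, x ^ 2 ∂gaussianReal μ v = μ ^ 2 + v := by
  rw [integral_pow_add_two_gaussianReal]
  simp [integral_id_gaussianReal, sq]

lemma integral_pow_three_gaussianReal :
    ∫ x, x ^ 3 ∂gaussianReal μ v = μ ^ 3 + 3 * μ * v := by
  rw [integral_pow_add_two_gaussianReal, integral_sq_gaussianReal]
  simp only [pow_one, integral_id_gaussianReal]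
  push_cast
  ring

lemma integral_pow_four_gaussianReal :
    ∫ x, x ^ 4 ∂gaussianReal μ v = μ ^ 4 + 6 * μ ^ 2 * v + 3 * v ^ 2 := by
  rw [integral_pow_add_two_gaussianReal, integral_pow_three_gaussianReal,
    integral_sq_gaussianReal]
  push_cast
  ring

lemma integral_pow_five_gaussianReal :
    ∫ x, x ^ 5 ∂gaussianReal μ v = μ ^ 5 + 10 * μ ^ 3 * v + 15 * μ * v ^ 2 := by
  rw [integral_pow_add_two_gaussianReal, integral_pow_four_gaussianReal,
    integral_pow_three_gaussianReal]
  push_cast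
  ring

lemma integral_pow_six_gaussianReal :
    ∫ x, x ^ 6 ∂gaussianReal μ v = μ ^ 6 + 15 * μ ^ 4 * v + 45 * μ ^ 2 * v ^ 2 + 15 * v ^ 3 := by
  rw [integral_pow_add_two_gaussianReal, integral_pow_five_gaussianReal,
    integral_pow_four_gaussianReal]
  push_cast
  ring

end Moments

section RandomVariables

variable {Ω : Type*} [MeasurableSpace Ω] {P : Measure Ω}

lemma gaussianReal_const_add_mul {X : Ω → ℝ} (hX : HasLaw X (gaussianReal 0 1) P) (c s : ℝ) :
    HasLaw (fun ω ↦ c + s * X ω) (gaussianReal c (.mk (s ^ 2) (sq_nonneg s))) P := by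
  simpa using gaussianReal_const_add (gaussianReal_const_mul hX s) c

variable {X : Ω → ℝ} {μ : ℝ} {v : ℝ≥0}

lemma HasLaw.integrable_pow_of_gaussianReal (hX : HasLaw X (gaussianReal μ v) P) (k : ℕ) :
    Integrable (fun ω ↦ X ω ^ k) P := by
  have h := integrable_pow_gaussianReal μ v k
  rwa [← hX.map_eq, integrable_map_measure (by fun_prop) hX.aemeasurable] at h

lemma HasLaw.integral_pow_of_gaussianReal (hX : HasLaw X (gaussianReal μ v) P) (k : ℕ) :
    ∫ ω, X ω ^ k ∂P = ∫ x, x ^ k ∂gaussianReal μ v :=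
  hX.integral_comp (f := fun x ↦ x ^ k) (by fun_prop)

theorem integral_norm_pow_six_of_hasLaw_gaussianReal {Z : Ω → ℂ} {m : ℂ}
    (hre : HasLaw (fun ω ↦ (Z ω).re) (gaussianReal m.re v) P)
    (him : HasLaw (fun ω ↦ (Z ω).im) (gaussianReal m.im v) P)
    (hind : IndepFun (fun ω ↦ (Z ω).re) (fun ω ↦ (Z ω).im) P) :
    ∫ ω, ‖Z ω‖ ^ 6 ∂P =
      ‖m‖ ^ 6 + 18 * ‖m‖ ^ 4 * v + 72 * ‖m‖ ^ 2 * v ^ 2 + 48 * v ^ 3 := by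
  have hprod (p q : ℕ) : IndepFun (fun ω ↦ (Z ω).re ^ p) (fun ω ↦ (Z ω).im ^ q) P :=
    hind.comp (measurable_id.pow_const p) (measurable_id.pow_const q)
  have hint (p q : ℕ) : Integrable (fun ω ↦ (Z ω).re ^ p * (Z ω).im ^ q) P :=
    (hprod p q).integrable_mul (hre.integrable_pow_of_gaussianReal p)
      (him.integrable_pow_of_gaussianReal q)
  have hmul (p q : ℕ) : ∫ ω, (Z ω).re ^ p * (Z ω).im ^ q ∂P =
      (∫ x, x ^ p ∂gaussianReal m.re v) * ∫ x, x ^ q ∂gaussianReal m.im v := by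
    rw [(hprod p q).integral_fun_mul_eq_mul_integral (hre.integrable_pow_of_gaussianReal p).1
      (him.integrable_pow_of_gaussianReal q).1, hre.integral_pow_of_gaussianReal,
      him.integral_pow_of_gaussianReal]
  have hexpand : (fun ω ↦ ‖Z ω‖ ^ 6) = fun ω ↦
      (Z ω).re ^ 6 * (Z ω).im ^ 0 + 3 * ((Z ω).re ^ 4 * (Z ω).im ^ 2) +
        3 * ((Z ω).re ^ 2 * (Z ω).im ^ 4) + (Z ω).re ^ 0 * (Z ω).im ^ 6 := by
    ext ω
    rw [show ‖Z ω‖ ^ 6 = (‖Z ω‖ ^ 2) ^ 3 by ring, Complex.sq_norm, Complex.normSq_apply]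
    ring
  rw [hexpand, integral_add, integral_add, integral_add, integral_const_mul, integral_const_mul,
    hmul, hmul, hmul, hmul]
  · simp only [pow_zero, integral_const, probReal_univ, smul_eq_mul, mul_one, one_mul,
      integral_sq_gaussianReal, integral_pow_four_gaussianReal, integral_pow_six_gaussianReal]
    rw [show ‖m‖ ^ 6 = (‖m‖ ^ 2) ^ 3 by ring, show ‖m‖ ^ 4 = (‖m‖ ^ 2) ^ 2 by ring,
      Complex.sq_norm, Complex.normSq_apply]
    ring
  all_goals fun_prop

end RandomVariables

end ProbabilityTheory

theorem expected_srcm_gaussian_closed_form_general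
    {Ω : Type*} [MeasurableSpace Ω] (P : Measure Ω)
    (L N : ℕ) (σ : ℝ) (hσ : 0 < σ)
    (μv : ℕ → ℂ) (Gr Gi : ℕ → Ω → ℝ)
    (hGr : ∀ n, Measurable (Gr n)) (hGi : ∀ n, Measurable (Gi n))
    (hGrdist : ∀ n, Measure.map (Gr n) P = gaussianReal 0 1)
    (hGidist : ∀ n, Measure.map (Gi n) P = gaussianReal 0 1)
    (hindep : ∀ n, IndepFun (Gr n) (Gi n) P) :
    (1 / (L * N) : ℝ) *
        ∑ n ∈ Finset.range (L * N),
          ∫ ω, ‖μv n + (σ : ℂ) * ((Gr n ω : ℂ) + Complex.I * (Gi n ω : ℂ))‖ ^ 6 ∂P =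
      (σ ^ 6 / (L * N)) *
        ∑ n ∈ Finset.range (L * N),
          ((‖μv n‖ ^ 2 / σ ^ 2) ^ 3 + 18 * (‖μv n‖ ^ 2 / σ ^ 2) ^ 2 +
            72 * (‖μv n‖ ^ 2 / σ ^ 2) + 48) := by
  have hmoment (n : ℕ) :
      ∫ ω, ‖μv n + (σ : ℂ) * ((Gr n ω : ℂ) + Complex.I * (Gi n ω : ℂ))‖ ^ 6 ∂P =
        σ ^ 6 * ((‖μv n‖ ^ 2 / σ ^ 2) ^ 3 + 18 * (‖μv n‖ ^ 2 / σ ^ 2) ^ 2 +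
          72 * (‖μv n‖ ^ 2 / σ ^ 2) + 48) := by
    have hre := gaussianReal_const_add_mul ⟨(hGr n).aemeasurable, hGrdist n⟩ (μv n).re σ
    have him := gaussianReal_const_add_mul ⟨(hGi n).aemeasurable, hGidist n⟩ (μv n).im σ
    have hind := (hindep n).comp (φ := fun x ↦ (μv n).re + σ * x)
      (ψ := fun x ↦ (μv n).im + σ * x) (by fun_prop) (by fun_prop)
    rw [integral_norm_pow_six_of_hasLaw_gaussianReal (by simpa using hre) (by simpa using him)
      (by simpa [Function.comp_def] using hind), NNReal.coe_mk]
    field_simp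
  simp only [hmoment, ← Finset.mul_sum]
  ring

/-- under the Gaussian model `S_n = μ_n + σ·W_n`, `W_n = G_{r,n} + i·G_{i,n}`
with `G_{r,n}, G_{i,n}` independent standard real Gaussians, and `λ_n = |μ_n|²/σ²`,
the expected SRCM admits the closed form
`(1/(LN)) Σ_n E[|S_n|^6] = (σ^6/(LN)) Σ_n (λ_n³ + 18λ_n² + 72λ_n + 48)`. -/
theorem expected_srcm_gaussian_closed_form
    {Ω : Type*} [MeasurableSpace Ω] (P : Measure Ω) [IsProbabilityMeasure P]
    (L N : ℕ) (hLN : 1 ≤ L * N) (σ : ℝ) (hσ : 0 < σ)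
    (μv : ℕ → ℂ) (Gr Gi : ℕ → Ω → ℝ)
    (hGr : ∀ n, Measurable (Gr n)) (hGi : ∀ n, Measurable (Gi n))
    (hGrdist : ∀ n, Measure.map (Gr n) P = gaussianReal 0 1)
    (hGidist : ∀ n, Measure.map (Gi n) P = gaussianReal 0 1)
    (hindep : ∀ n, IndepFun (Gr n) (Gi n) P) :
    (1 / (L * N) : ℝ) *
        ∑ n ∈ Finset.range (L * N),
          ∫ ω, ‖μv n + (σ : ℂ) * ((Gr n ω : ℂ) + Complex.I * (Gi n ω : ℂ))‖ ^ 6 ∂P =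
      (σ ^ 6 / (L * N)) *
        ∑ n ∈ Finset.range (L * N),
          ((‖μv n‖ ^ 2 / σ ^ 2) ^ 3 + 18 * (‖μv n‖ ^ 2 / σ ^ 2) ^ 2 +
            72 * (‖μv n‖ ^ 2 / σ ^ 2) + 48) :=
  expected_srcm_gaussian_closed_form_general P L N σ hσ μv Gr Gi hGr hGi hGrdist hGidist hindep
end
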